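/- Let Q be an inverse quantal frame, X a Q-sheaf, and s a local section of X. Then the following conditions are equivalent: (1) ⟨s,s⟩ ≤ e; (2) ς_X(s) = ⟨s,s⟩; (3) for all a ∈ Q with as = s one has a·ς_X(s) = ς_X(s); (4) for all a ∈ Q with ς_Q(a*) = ς_X(s) and as = s one has a ≤ e. -/

import Mathlib

/-- A unital involutive quantale: a complete lattice with an associative
multiplication preserving arbitrary joins in each variable, a unit `e`, and a
join-preserving involution. -/
structure InvQuantale (Q : Type*) [CompleteLattice Q] where
  mul : Q → Q → Q
  e : Q
  star : Q → Q
  mul_assoc : ∀ a b c, mul (mul a b) c = mul a (mul b c)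
  sSup_mul : ∀ (S : Set Q) (b : Q), mul (sSup S) b = ⨆ a ∈ S, mul a b
  mul_sSup : ∀ (a : Q) (S : Set Q), mul a (sSup S) = ⨆ b ∈ S, mul a b
  e_mul : ∀ a, mul e a = a
  mul_e : ∀ a, mul a e = a
  star_star : ∀ a, star (star a) = a
  star_mul : ∀ a b, star (mul a b) = mul (star b) (star a)
  star_sSup : ∀ S : Set Q, star (sSup S) = ⨆ a ∈ S, star a

/-- The set of partial units of a quantale. -/
def InvQuantale.PU {Q : Type*} [CompleteLattice Q] (Qs : InvQuantale Q) : Set Q :=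
  {s | Qs.mul s (Qs.star s) ≤ Qs.e ∧ Qs.mul (Qs.star s) s ≤ Qs.e}

/-- An inverse quantal frame: a unital involutive quantale which is a frame,
has a stable support, and whose partial units join to the top. -/
structure InverseQuantalFrame (Q : Type*) [Order.Frame Q] extends InvQuantale Q where
  supp : Q → Q
  supp_le_e : ∀ a, supp a ≤ e
  supp_sSup : ∀ S : Set Q, supp (sSup S) = ⨆ a ∈ S, supp a
  supp_le_mul_star : ∀ a, supp a ≤ mul a (star a)
  le_supp_mul : ∀ a, a ≤ mul (supp a) a
  supp_stable : ∀ b a, b ≤ e → supp (mul b a) = mul b (supp a)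
  sSup_PU : sSup {s | mul s (star s) ≤ e ∧ mul (star s) s ≤ e} = ⊤

/-- A left module over a quantale: a complete lattice with a unital associative
action preserving arbitrary joins in each variable. -/
structure QuantaleModule {Q : Type*} [CompleteLattice Q] (Qs : InvQuantale Q)
    (X : Type*) [CompleteLattice X] where
  act : Q → X → X
  act_mul : ∀ a b x, act (Qs.mul a b) x = act a (act b x)
  act_e : ∀ x, act Qs.e x = x
  sSup_act : ∀ (S : Set Q) (x : X), act (sSup S) x = ⨆ a ∈ S, act a x
  act_sSup : ∀ (a : Q) (S : Set X), act a (sSup S) = ⨆ x ∈ S, act a x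

/-- A pre-Hilbert module over a quantale. -/
structure PreHilbertModule {Q : Type*} [CompleteLattice Q] (Qs : InvQuantale Q)
    (X : Type*) [CompleteLattice X] extends QuantaleModule Qs X where
  inner : X → X → Q
  inner_act : ∀ a x y, inner (act a x) y = Qs.mul a (inner x y)
  sSup_inner : ∀ (S : Set X) (y : X), inner (sSup S) y = ⨆ x ∈ S, inner x y
  inner_star : ∀ x y, inner x y = Qs.star (inner y x)

namespace PreHilbertModule

variable {Q X : Type*} [CompleteLattice Q] [CompleteLattice X] {Qs : InvQuantale Q}

/-- A Hilbert section: `⟨x,s⟩s ≤ x` for all `x`. -/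
def IsHilbertSection (H : PreHilbertModule Qs X) (s : X) : Prop :=
  ∀ x, H.act (H.inner x s) s ≤ x

/-- A regular element: `⟨s,s⟩s = s`. -/
def IsRegularSection (H : PreHilbertModule Qs X) (s : X) : Prop :=
  H.act (H.inner s s) s = s

/-- A Hilbert basis: `x = ⋁_{t ∈ S} ⟨x,t⟩t` for all `x`. -/
def IsHilbertBasis (H : PreHilbertModule Qs X) (S : Set X) : Prop :=
  ∀ x, x = ⨆ t ∈ S, H.act (H.inner x t) t

/-- Non-degeneracy of the inner product. -/
def Nondegenerate (H : PreHilbertModule Qs X) : Prop :=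
  ∀ x y, (∀ z, H.inner x z = H.inner y z) → x = y

end PreHilbertModule

/-- A `Q`-locale over an inverse quantal frame: a module which is a frame and
satisfies the anchor condition. -/
structure QLocale {Q : Type*} [Order.Frame Q] (Qf : InverseQuantalFrame Q)
    (X : Type*) [Order.Frame X] extends QuantaleModule Qf.toInvQuantale X where
  anchor : ∀ b x, b ≤ Qf.e → act b x = act b ⊤ ⊓ x

/-- A `Q`-sheaf over an inverse quantal frame: a pre-Hilbert module which is a
frame, satisfies the anchor condition, and has a Hilbert basis. -/
structure QSheaf {Q : Type*} [Order.Frame Q] (Qf : InverseQuantalFrame Q)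
    (X : Type*) [Order.Frame X] extends PreHilbertModule Qf.toInvQuantale X where
  anchor : ∀ b x, b ≤ Qf.e → act b x = act b ⊤ ⊓ x
  hasBasis : ∃ S : Set X, ∀ x, x = ⨆ t ∈ S, act (inner x t) t

namespace QSheaf

variable {Q X : Type*} [Order.Frame Q] [Order.Frame X] {Qf : InverseQuantalFrame Q}

/-- The support `ς_X(x) = ⟨x,x⟩ ∧ e` of a `Q`-sheaf. -/
def sppX (H : QSheaf Qf X) (x : X) : Q := H.inner x x ⊓ Qf.e

/-- A local section: `ς_X(x)s = x` for all `x ≤ s`. -/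
def IsLocalSection (H : QSheaf Qf X) (s : X) : Prop :=
  ∀ x ≤ s, H.act (H.sppX x) s = x

/-- A principal section: a local section with `⟨s,s⟩ ≤ e`. -/
def IsPrincipalSection (H : QSheaf Qf X) (s : X) : Prop :=
  H.IsLocalSection s ∧ H.inner s s ≤ Qf.e

/-- A right local section: `x = s ∧ 1_Q·x` for all `x ≤ s`. -/
def IsRightLocalSection (H : QSheaf Qf X) (s : X) : Prop :=
  ∀ x ≤ s, x = s ⊓ H.act ⊤ x

/-- A local bisection: simultaneously a local section and a right local section. -/
def IsBisection (H : QSheaf Qf X) (s : X) : Prop :=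
  H.IsLocalSection s ∧ H.IsRightLocalSection s

end QSheaf

/-!
The core fact is that a local section `s` is fixed by `⟨s,s⟩`: `s = ς_X(s)s ≤ ⟨s,s⟩s`, and
`⟨s,s⟩s ≤ s` because `s` is a Hilbert section. For the Hilbert property, expanding `x` in a
Hilbert basis reduces `⟨x,s⟩s ≤ x` to `⟨t,s⟩s ≤ t` for basis elements `t`, and writing `⟨t,s⟩`
as a join of elements `v` below partial units reduces it to `vs ≤ t`. For such `v`, `y = v*t`
lies below `s`, so `ς_X(y)s = y`; stability of the support gives `v ≤ ⟨t,t⟩v`, hence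
`ς_Q(v*) ≤ ς_X(y)` and `vs ≤ vς_Q(v*)s ≤ vς_X(y)s = vv*t ≤ t`.

With `⟨s,s⟩s = s` the cycle closes: (2 → 3) is `a⟨s,s⟩ = ⟨as,s⟩`, (3 → 4) uses
`a ≤ aς_Q(a*)`, and (4 → 1) applies (4) to the idempotent `a = ⟨s,s⟩`, whose support is `ς_X(s)`.
-/

section SSupPreserving

variable {α β ι : Type*} [CompleteLattice α] [CompleteLattice β] {f : α → β}

theorem monotone_of_map_sSup (hf : ∀ S, f (sSup S) = ⨆ a ∈ S, f a) : Monotone f := by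
  intro a b hab
  have h := hf {a, b}
  rw [sSup_pair, sup_eq_right.mpr hab] at h
  rw [h]
  exact le_iSup₂_of_le a (by simp) le_rfl

theorem map_biSup_of_map_sSup (hf : ∀ S, f (sSup S) = ⨆ a ∈ S, f a) (S : Set ι) (g : ι → α) :
    f (⨆ i ∈ S, g i) = ⨆ i ∈ S, f (g i) := by
  rw [← sSup_image, hf, iSup_image]

end SSupPreserving

namespace InvQuantale

variable {Q : Type*} [CompleteLattice Q] (Qs : InvQuantale Q)

theorem mul_le_mul {a b c d : Q} (hab : a ≤ b) (hcd : c ≤ d) : Qs.mul a c ≤ Qs.mul b d :=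
  (monotone_of_map_sSup (f := (Qs.mul · c)) (Qs.sSup_mul · c) hab).trans
    (monotone_of_map_sSup (f := Qs.mul b) (Qs.mul_sSup b) hcd)

theorem star_mono {a b : Q} (h : a ≤ b) : Qs.star a ≤ Qs.star b :=
  monotone_of_map_sSup Qs.star_sSup h

end InvQuantale

namespace InverseQuantalFrame

variable {Q : Type*} [Order.Frame Q] (Qf : InverseQuantalFrame Q)

theorem supp_mono {a b : Q} (h : a ≤ b) : Qf.supp a ≤ Qf.supp b :=
  monotone_of_map_sSup Qf.supp_sSup h

theorem supp_e : Qf.supp Qf.e = Qf.e :=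
  le_antisymm (Qf.supp_le_e _) (by simpa only [Qf.mul_e] using Qf.le_supp_mul Qf.e)

theorem supp_of_le_e {b : Q} (h : b ≤ Qf.e) : Qf.supp b = b := by
  simpa only [Qf.mul_e, supp_e] using Qf.supp_stable b Qf.e h

theorem star_of_le_e {b : Q} (h : b ≤ Qf.e) : Qf.star b = b := by
  have hle : b ≤ Qf.star b :=
    calc b = Qf.supp b := (Qf.supp_of_le_e h).symm
      _ ≤ Qf.mul b (Qf.star b) := Qf.supp_le_mul_star b
      _ ≤ Qf.mul Qf.e (Qf.star b) := Qf.mul_le_mul h le_rfl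
      _ = Qf.star b := Qf.e_mul _
  refine le_antisymm ?_ hle
  simpa only [Qf.star_star] using Qf.star_mono hle

theorem le_mul_supp_star (a : Q) : a ≤ Qf.mul a (Qf.supp (Qf.star a)) := by
  simpa only [Qf.star_star, Qf.star_mul, Qf.star_of_le_e (Qf.supp_le_e _)] using
    Qf.star_mono (Qf.le_supp_mul (Qf.star a))

theorem supp_le_of_le_mul_top {b v : Q} (hb : b ≤ Qf.e) (hv : v ≤ Qf.mul b ⊤) :
    Qf.supp v ≤ b :=
  calc Qf.supp v ≤ Qf.supp (Qf.mul b ⊤) := Qf.supp_mono hv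
    _ = Qf.mul b (Qf.supp ⊤) := Qf.supp_stable b ⊤ hb
    _ ≤ Qf.mul b Qf.e := Qf.mul_le_mul le_rfl (Qf.supp_le_e ⊤)
    _ = b := Qf.mul_e b

theorem iSup_inf_PU (a : Q) : ⨆ u ∈ Qf.PU, a ⊓ u = a := by
  rw [← inf_sSup_eq, InvQuantale.PU, Qf.sSup_PU, inf_top_eq]

end InverseQuantalFrame

namespace QuantaleModule

variable {Q X : Type*} [CompleteLattice Q] [CompleteLattice X] {Qs : InvQuantale Q}
  (M : QuantaleModule Qs X)

theorem act_mono {a b : Q} {x y : X} (hab : a ≤ b) (hxy : x ≤ y) : M.act a x ≤ M.act b y :=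
  (monotone_of_map_sSup (f := (M.act · x)) (M.sSup_act · x) hab).trans
    (monotone_of_map_sSup (f := M.act b) (M.act_sSup b) hxy)

theorem act_biSup {ι : Type*} (S : Set ι) (f : ι → Q) (x : X) :
    M.act (⨆ i ∈ S, f i) x = ⨆ i ∈ S, M.act (f i) x :=
  map_biSup_of_map_sSup (f := (M.act · x)) (M.sSup_act · x) S f

end QuantaleModule

namespace PreHilbertModule

variable {Q X : Type*} [CompleteLattice Q] [CompleteLattice X] {Qs : InvQuantale Q}
  (H : PreHilbertModule Qs X)

theorem inner_mono_left {x y : X} (h : x ≤ y) (z : X) : H.inner x z ≤ H.inner y z :=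
  monotone_of_map_sSup (f := (H.inner · z)) (H.sSup_inner · z) h

theorem inner_biSup {ι : Type*} (S : Set ι) (f : ι → X) (y : X) :
    H.inner (⨆ i ∈ S, f i) y = ⨆ i ∈ S, H.inner (f i) y :=
  map_biSup_of_map_sSup (f := (H.inner · y)) (H.sSup_inner · y) S f

theorem star_inner (x y : X) : Qs.star (H.inner x y) = H.inner y x := by
  rw [H.inner_star x y, Qs.star_star]

theorem inner_act_right (a : Q) (x y : X) :
    H.inner x (H.act a y) = Qs.mul (H.inner x y) (Qs.star a) := by
  rw [H.inner_star x, H.inner_act, Qs.star_mul, H.star_inner]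

theorem isHilbertSection_of_mem {S : Set X} (hS : H.IsHilbertBasis S) {t : X} (ht : t ∈ S) :
    H.IsHilbertSection t := fun x => by
  conv_rhs => rw [hS x]
  exact le_iSup₂_of_le t ht le_rfl

end PreHilbertModule

namespace QSheaf

variable {Q X : Type*} [Order.Frame Q] [Order.Frame X] {Qf : InverseQuantalFrame Q}
  (H : QSheaf Qf X)

theorem act_le_of_le_e {b : Q} (hb : b ≤ Qf.e) (x : X) : H.act b x ≤ x := by
  rw [H.anchor b x hb]
  exact inf_le_right

theorem supp_inner_le_sppX {x t : X} (h : H.act (H.inner x t) t ≤ x) :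
    Qf.supp (H.inner x t) ≤ H.sppX x := by
  refine le_inf ?_ (Qf.supp_le_e _)
  calc Qf.supp (H.inner x t) ≤ Qf.mul (H.inner x t) (Qf.star (H.inner x t)) :=
        Qf.supp_le_mul_star _
    _ = H.inner (H.act (H.inner x t) t) x := by rw [H.star_inner, H.inner_act]
    _ ≤ H.inner x x := H.inner_mono_left h x

theorem act_sppX (x : X) : H.act (H.sppX x) x = x := by
  refine le_antisymm (H.act_le_of_le_e inf_le_right x) ?_
  obtain ⟨S, hS⟩ := H.hasBasis
  conv_lhs => rw [hS x]
  refine iSup₂_le fun t ht => ?_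
  have hxt := H.isHilbertSection_of_mem hS ht x
  calc H.act (H.inner x t) t
      ≤ H.act (Qf.supp (H.inner x t)) (H.act (H.inner x t) t) := by
        rw [← H.act_mul]
        exact H.act_mono (Qf.le_supp_mul _) le_rfl
    _ ≤ H.act (H.sppX x) x := H.act_mono (H.supp_inner_le_sppX hxt) hxt

theorem le_inner_self_mul {t z : X} {v : Q} (hv : v ≤ H.inner t z) :
    v ≤ Qf.mul (H.inner t t) v := by
  have hvtop : v ≤ Qf.mul (H.sppX t) ⊤ := by
    refine hv.trans ?_
    conv_lhs => rw [← H.act_sppX t, H.inner_act]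
    exact Qf.mul_le_mul le_rfl le_top
  calc v ≤ Qf.mul (Qf.supp v) v := Qf.le_supp_mul v
    _ ≤ Qf.mul (H.sppX t) v := Qf.mul_le_mul (Qf.supp_le_of_le_mul_top inf_le_right hvtop) le_rfl
    _ ≤ Qf.mul (H.inner t t) v := Qf.mul_le_mul inf_le_left le_rfl

variable {H}

theorem act_le_of_le_inner {s t : X} (hs : H.IsLocalSection s)
    (ht : H.IsHilbertSection t) {v : Q} (hv : v ≤ H.inner t s)
    (hvv : Qf.mul v (Qf.star v) ≤ Qf.e) : H.act v s ≤ t := by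
  set y := H.act (Qf.star v) t
  have hy : y ≤ s := by
    refine (H.act_mono ?_ le_rfl).trans (ht s)
    simpa only [H.star_inner] using Qf.star_mono hv
  have hsupp : Qf.supp (Qf.star v) ≤ H.sppX y := by
    refine le_inf ?_ (Qf.supp_le_e _)
    calc Qf.supp (Qf.star v) ≤ Qf.mul (Qf.star v) v := by
          simpa only [Qf.star_star] using Qf.supp_le_mul_star (Qf.star v)
      _ ≤ Qf.mul (Qf.star v) (Qf.mul (H.inner t t) v) :=
          Qf.mul_le_mul le_rfl (H.le_inner_self_mul hv)
      _ = H.inner y y := by rw [H.inner_act, H.inner_act_right, Qf.star_star]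
  calc H.act v s ≤ H.act (Qf.mul v (Qf.supp (Qf.star v))) s :=
        H.act_mono (Qf.le_mul_supp_star v) le_rfl
    _ ≤ H.act v (H.act (H.sppX y) s) := by
        rw [H.act_mul]
        exact H.act_mono le_rfl (H.act_mono hsupp le_rfl)
    _ = H.act (Qf.mul v (Qf.star v)) t := by rw [hs y hy, H.act_mul]
    _ ≤ t := H.act_le_of_le_e hvv t

theorem act_inner_le_of_isHilbertSection {s t : X} (hs : H.IsLocalSection s)
    (ht : H.IsHilbertSection t) : H.act (H.inner t s) s ≤ t := by
  rw [← Qf.iSup_inf_PU (H.inner t s), H.act_biSup]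
  refine iSup₂_le fun u hu => act_le_of_le_inner hs ht inf_le_left ?_
  exact (Qf.mul_le_mul inf_le_right (Qf.star_mono inf_le_right)).trans hu.1

theorem isHilbertSection_of_isLocalSection {s : X} (hs : H.IsLocalSection s) :
    H.IsHilbertSection s := fun x => by
  obtain ⟨S, hS⟩ := H.hasBasis
  calc H.act (H.inner x s) s
      = ⨆ t ∈ S, H.act (H.inner x t) (H.act (H.inner t s) s) := by
        conv_lhs => rw [hS x]
        simp only [H.inner_biSup, H.inner_act, H.act_biSup, H.act_mul]
    _ ≤ ⨆ t ∈ S, H.act (H.inner x t) t := iSup₂_mono fun t ht =>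
        H.act_mono le_rfl
          (act_inner_le_of_isHilbertSection hs (H.isHilbertSection_of_mem hS ht))
    _ = x := (hS x).symm

theorem isRegularSection_of_isLocalSection {s : X} (hs : H.IsLocalSection s) :
    H.IsRegularSection s := by
  refine le_antisymm (isHilbertSection_of_isLocalSection hs s) ?_
  conv_lhs => rw [← H.act_sppX s]
  exact H.act_mono inf_le_left le_rfl

theorem supp_inner_self {s : X} (hs : H.IsRegularSection s) :
    Qf.supp (H.inner s s) = H.sppX s := by
  have hidem : Qf.mul (H.inner s s) (H.inner s s) = H.inner s s := by
    rw [← H.inner_act, hs]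
  refine le_antisymm (le_inf ?_ (Qf.supp_le_e _)) ?_
  · simpa only [H.star_inner, hidem] using Qf.supp_le_mul_star (H.inner s s)
  · calc H.sppX s = Qf.supp (H.sppX s) := (Qf.supp_of_le_e inf_le_right).symm
      _ ≤ Qf.supp (H.inner s s) := Qf.supp_mono inf_le_left

end QSheaf

/-- Equivalent characterizations of a principal section of a
`Q`-sheaf. -/
theorem stmt9 {Q X : Type*} [Order.Frame Q] [Order.Frame X]
    (Qf : InverseQuantalFrame Q) (H : QSheaf Qf X)
    (s : X) (hs : H.IsLocalSection s) :
    List.TFAE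
      [H.inner s s ≤ Qf.e,
       H.sppX s = H.inner s s,
       ∀ a, H.act a s = s → Qf.mul a (H.sppX s) = H.sppX s,
       ∀ a, Qf.supp (Qf.star a) = H.sppX s → H.act a s = s → a ≤ Qf.e] := by
  have hreg := QSheaf.isRegularSection_of_isLocalSection hs
  tfae_have 1 → 2 := inf_eq_left.mpr
  tfae_have 2 → 3 := fun h a ha => by rw [h, ← H.inner_act, ha]
  tfae_have 3 → 4 := fun h a hsupp ha =>
    calc a ≤ Qf.mul a (Qf.supp (Qf.star a)) := Qf.le_mul_supp_star a
      _ = H.sppX s := by rw [hsupp, h a ha]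
      _ ≤ Qf.e := inf_le_right
  tfae_have 4 → 1 := fun h =>
    h _ (by rw [H.star_inner, QSheaf.supp_inner_self hreg]) hreg
  tfae_finish
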